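/- The 0-odometer O_0 is uniquely ergodic: there exists exactly one O_0-invariant Borel probability measure on Σ_{≥0}. -/

import Mathlib

open MeasureTheory

/-- The `0`-odometer on the Baire-type space `ℕ₀^ℕ`:
`O₀(w₁,w₂,w₃,…) = (0,…,0 (w₁ times), w₂+1, w₃, …)`. -/
def baireOdometer (w : ℕ → ℕ) : ℕ → ℕ := fun i =>
  if i < w 0 then 0
  else if i = w 0 then w 1 + 1
  else w (i - w 0 + 1)

section BOdoAux

open Set
open scoped ENNReal

namespace BOdo

def shf (w : ℕ → ℕ) : ℕ → ℕ := fun i => w (i + 1)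
def dec (w : ℕ → ℕ) : ℕ → ℕ := fun i => if i = 0 then w 0 - 1 else w i

def D : List Bool → Set (ℕ → ℕ)
  | [] => Set.univ
  | true :: u => {w | w 0 ≠ 0} ∩ dec ⁻¹' D u
  | false :: u => {w | w 0 = 0} ∩ shf ⁻¹' D u

lemma measurable_shf : Measurable shf :=
  measurable_pi_lambda _ fun i => measurable_pi_apply (i + 1)

lemma measurable_dec : Measurable dec := by
  apply measurable_pi_lambda
  intro i
  show Measurable fun w : ℕ → ℕ => if i = 0 then w 0 - 1 else w i
  by_cases h : i = 0
  · simp only [if_pos h]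
    exact Measurable.comp (g := fun n : ℕ => n - 1) (fun _ _ => trivial)
      (measurable_pi_apply 0)
  · simp only [if_neg h]; exact measurable_pi_apply i

lemma measurableSet_D (u : List Bool) : MeasurableSet (D u) := by
  induction u with
  | nil => exact MeasurableSet.univ
  | cons b u ih =>
    cases b
    · exact (((measurable_pi_apply 0) (measurableSet_singleton 0))).inter
        (measurable_shf ih)
    · exact ((measurable_pi_apply 0) (measurableSet_singleton 0)).compl.inter
        (measurable_dec ih)

lemma odo_zero (w : ℕ → ℕ) : baireOdometer w 0 = 0 ↔ w 0 ≠ 0 := by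
  rcases Nat.eq_zero_or_pos (w 0) with h | h <;> simp [baireOdometer, h]
  omega

lemma shf_odo (w : ℕ → ℕ) (h : w 0 ≠ 0) :
    shf (baireOdometer w) = baireOdometer (dec w) := by
  funext i
  have hw : 1 ≤ w 0 := Nat.pos_of_ne_zero h
  have d0 : dec w 0 = w 0 - 1 := by simp [dec]
  have d1 : dec w 1 = w 1 := by simp [dec]
  show baireOdometer w (i + 1) = baireOdometer (dec w) i
  unfold baireOdometer
  rw [d0, d1]
  rcases lt_trichotomy (i + 1) (w 0) with h1 | h1 | h1
  · rw [if_pos h1, if_pos (by omega)]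
  · rw [if_neg (by omega), if_pos h1, if_neg (by omega), if_pos (by omega)]
  · rw [if_neg (by omega), if_neg (by omega), if_neg (by omega), if_neg (by omega)]
    have hidx : i - (w 0 - 1) + 1 = i + 1 - w 0 + 1 := by omega
    rw [hidx]
    have : dec w (i + 1 - w 0 + 1) = w (i + 1 - w 0 + 1) := by
      simp only [dec, if_neg (Nat.succ_ne_zero _)]
    rw [this]

lemma dec_odo (w : ℕ → ℕ) (h : w 0 = 0) : dec (baireOdometer w) = shf w := by
  funext i
  cases i with
  | zero => simp [dec, shf, baireOdometer, h]
  | succ k => simp [dec, shf, baireOdometer, h]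

def bsucc : List Bool → List Bool
  | [] => []
  | false :: u => true :: u
  | true :: u => false :: bsucc u

def bpred : List Bool → List Bool
  | [] => []
  | true :: u => false :: u
  | false :: u => true :: bpred u

@[simp] lemma length_bsucc (u : List Bool) : (bsucc u).length = u.length := by
  induction u with
  | nil => rfl
  | cons b u ih => cases b <;> simp [bsucc, ih]

@[simp] lemma length_bpred (u : List Bool) : (bpred u).length = u.length := by
  induction u with
  | nil => rfl
  | cons b u ih => cases b <;> simp [bpred, ih]

@[simp] lemma bsucc_bpred (u : List Bool) : bsucc (bpred u) = u := by
  induction u with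
  | nil => rfl
  | cons b u ih => cases b <;> simp [bpred, bsucc, ih]

@[simp] lemma bpred_bsucc (u : List Bool) : bpred (bsucc u) = u := by
  induction u with
  | nil => rfl
  | cons b u ih => cases b <;> simp [bpred, bsucc, ih]

def bval : List Bool → ℕ
  | [] => 0
  | b :: u => (cond b 1 0) + 2 * bval u

lemma bval_lt (u : List Bool) : bval u < 2 ^ u.length := by
  induction u with
  | nil => simp [bval]
  | cons b u ih => cases b <;> simp [bval, pow_succ] <;> omega

lemma bval_bsucc (u : List Bool) :
    bval (bsucc u) = (bval u + 1) % 2 ^ u.length := by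
  induction u with
  | nil => rfl
  | cons b u ih =>
    cases b
    · have := bval_lt u
      simp only [bsucc, bval, cond]
      rw [Nat.mod_eq_of_lt (by simp [pow_succ]; omega)]
      omega
    · simp only [bsucc, bval, cond, ih, List.length_cons]
      rw [pow_succ]
      have h1 : 1 + 2 * bval u + 1 = 2 * (bval u + 1) := by ring
      have h2 : (2:ℕ) ^ u.length * 2 = 2 * 2 ^ u.length := by ring
      rw [h1, h2, Nat.mul_mod_mul_left]
      ring
lemma bval_inj : ∀ u v : List Bool, u.length = v.length → bval u = bval v → u = v := by
  intro u
  induction u with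
  | nil => intro v hv _; cases v; rfl; simp at hv
  | cons b u ih =>
    intro v hv he
    cases v with
    | nil => simp at hv
    | cons c v =>
      simp only [bval] at he
      have hbc : b = c := by cases b <;> cases c <;> simp at he ⊢ <;> omega
      subst hbc
      have : bval u = bval v := by cases b <;> simp at he <;> omega
      simp at hv
      rw [ih v hv this]

lemma mem_D_bsucc (u : List Bool) : ∀ w, baireOdometer w ∈ D (bsucc u) ↔ w ∈ D u := by
  induction u with
  | nil => intro w; simp [bsucc, D]
  | cons b u ih =>
    intro w
    cases b
    · -- u = false :: u : bsucc = true :: u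
      simp only [bsucc, D, Set.mem_inter_iff, Set.mem_setOf_eq, Set.mem_preimage]
      constructor
      · rintro ⟨h1, h2⟩
        have hw : w 0 = 0 := by
          by_contra hw
          exact h1 ((odo_zero w).2 hw)
        rw [dec_odo w hw] at h2
        exact ⟨hw, h2⟩
      · rintro ⟨h1, h2⟩
        refine ⟨fun h => by simp [odo_zero w, h1] at h, ?_⟩
        rw [dec_odo w h1]
        exact h2
    · -- u = true :: u : bsucc = false :: bsucc u
      simp only [bsucc, D, Set.mem_inter_iff, Set.mem_setOf_eq, Set.mem_preimage]
      constructor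
      · rintro ⟨h1, h2⟩
        have hw : w 0 ≠ 0 := (odo_zero w).1 h1
        rw [shf_odo w hw] at h2
        exact ⟨hw, (ih (dec w)).1 h2⟩
      · rintro ⟨h1, h2⟩
        refine ⟨(odo_zero w).2 h1, ?_⟩
        rw [shf_odo w h1]
        exact (ih (dec w)).2 h2

lemma preimage_D (u : List Bool) : baireOdometer ⁻¹' D u = D (bpred u) := by
  ext w
  rw [Set.mem_preimage]
  conv_lhs => rw [← bsucc_bpred u]
  exact mem_D_bsucc (bpred u) w

lemma D_split (u : List Bool) : D u = D (u ++ [false]) ∪ D (u ++ [true]) := by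
  induction u with
  | nil =>
    ext w
    simp only [List.nil_append, D, Set.mem_univ, Set.mem_union, Set.mem_inter_iff,
      Set.mem_setOf_eq, Set.mem_preimage, Set.mem_univ, and_true, true_iff]
    exact (em (w 0 = 0)).imp id id
  | cons b u ih =>
    cases b <;> rw [List.cons_append, List.cons_append] <;> simp only [D] <;>
      rw [← Set.inter_union_distrib_left, ← Set.preimage_union, ← ih]

lemma D_disj (u : List Bool) : Disjoint (D (u ++ [false])) (D (u ++ [true])) := by
  induction u with
  | nil =>
    simp only [List.nil_append, D]
    refine Set.disjoint_left.mpr ?_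
    rintro w ⟨h1, -⟩ ⟨h2, -⟩
    exact h2 h1
  | cons b u ih =>
    cases b <;> rw [List.cons_append, List.cons_append] <;> simp only [D] <;>
      exact Disjoint.mono Set.inter_subset_right Set.inter_subset_right (ih.preimage _)

lemma forced (μ : Measure (ℕ → ℕ)) [IsProbabilityMeasure μ]
    (hμ : ∀ s : Set (ℕ → ℕ), MeasurableSet s → μ (baireOdometer ⁻¹' s) = μ s) :
    ∀ u : List Bool, μ (D u) = 2⁻¹ ^ u.length := by
  have step : ∀ u : List Bool, μ (D u) = μ (D (bsucc u)) := by
    intro u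
    have h := hμ (D (bsucc u)) (measurableSet_D _)
    rw [preimage_D, bpred_bsucc] at h
    exact h
  have iter : ∀ (k : ℕ) (u : List Bool), μ (D u) = μ (D (bsucc^[k] u)) := by
    intro k
    induction k with
    | zero => intro u; rfl
    | succ k ih => intro u; rw [step u, ih (bsucc u), Function.iterate_succ_apply]
  have len_iter : ∀ (k : ℕ) (u : List Bool), (bsucc^[k] u).length = u.length := by
    intro k
    induction k with
    | zero => intro u; rfl
    | succ k ih => intro u; rw [Function.iterate_succ_apply', length_bsucc, ih]
  have val_iter : ∀ (k : ℕ) (u : List Bool),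
      bval (bsucc^[k] u) = (bval u + k) % 2 ^ u.length := by
    intro k
    induction k with
    | zero => intro u; simp [Nat.mod_eq_of_lt (bval_lt u)]
    | succ k ih =>
      intro u
      rw [Function.iterate_succ_apply', bval_bsucc, len_iter, ih, Nat.mod_add_mod,
        Nat.add_assoc]
  have const : ∀ u v : List Bool, u.length = v.length → μ (D u) = μ (D v) := by
    intro u v hlen
    have hk : bsucc^[2 ^ u.length - bval u + bval v] u = v := by
      apply bval_inj _ _ (by rw [len_iter, hlen])
      rw [val_iter]
      have h1 := bval_lt u
      have h2 := bval_lt v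
      rw [← hlen] at h2
      have he : bval u + (2 ^ u.length - bval u + bval v) = 2 ^ u.length + bval v := by omega
      rw [he, Nat.add_mod_left, Nat.mod_eq_of_lt h2]
    rw [iter (2 ^ u.length - bval u + bval v) u, hk]
  suffices H : ∀ (L : ℕ) (u : List Bool), u.length = L → μ (D u) = 2⁻¹ ^ L by
    intro u; exact H u.length u rfl
  intro L
  induction L with
  | zero =>
    intro u h
    rw [List.length_eq_zero_iff.mp h]
    show μ Set.univ = _
    simp
  | succ L ih =>
    intro u hu
    have h0 : μ (D (List.replicate L false)) = 2⁻¹ ^ L := ih _ List.length_replicate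
    have hm : μ (D (List.replicate L false)) =
        μ (D (List.replicate L false ++ [false])) + μ (D (List.replicate L false ++ [true])) := by
      rw [D_split (List.replicate L false)]
      exact measure_union (D_disj _) (measurableSet_D _)
    have e1 : μ (D (List.replicate L false ++ [false])) = μ (D u) :=
      const _ _ (by simp [hu])
    have e2 : μ (D (List.replicate L false ++ [true])) = μ (D u) :=
      const _ _ (by simp [hu])
    rw [e1, e2, h0] at hm
    have h2 : (2 : ℝ≥0∞)⁻¹ * (2⁻¹ ^ L) = μ (D u) := by
      rw [hm, ← two_mul, ← mul_assoc,
        ENNReal.inv_mul_cancel two_ne_zero ENNReal.ofNat_ne_top, one_mul]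
    rw [← h2, pow_succ]
    ring

def cylSet : Set (Set (ℕ → ℕ)) := {s | ∃ u : List Bool, s = D u}

lemma D_append_subset (u t : List Bool) : D (u ++ t) ⊆ D u := by
  induction u with
  | nil => exact Set.subset_univ _
  | cons b u ih =>
    cases b <;> rw [List.cons_append] <;> simp only [D] <;>
      exact Set.inter_subset_inter_right _ (Set.preimage_mono ih)

lemma eq_take_of_mem (u : List Bool) : ∀ (v : List Bool) (w : ℕ → ℕ), w ∈ D u → w ∈ D v →
    u.length ≤ v.length → u = v.take u.length := by
  induction u with
  | nil => intro v w _ _ _; rfl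
  | cons b u ih =>
    intro v w hu hv hlen
    cases v with
    | nil => simp at hlen
    | cons c v =>
      have hbc : b = c := by
        cases b <;> cases c
        · rfl
        · exact absurd hu.1 hv.1
        · exact absurd hv.1 hu.1
        · rfl
      subst hbc
      have hlen' : u.length ≤ v.length := by simpa using hlen
      cases b
      · have h := ih v (shf w) hu.2 hv.2 hlen'
        simp only [List.length_cons, List.take_succ_cons]
        rw [← h]
      · have h := ih v (dec w) hu.2 hv.2 hlen'
        simp only [List.length_cons, List.take_succ_cons]
        rw [← h]

lemma isPiSystem_cylSet : IsPiSystem cylSet := by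
  have key : ∀ (u v : List Bool) (w : ℕ → ℕ), w ∈ D u → w ∈ D v → u.length ≤ v.length →
      D u ∩ D v = D v := by
    intro u v w hwu hwv h
    have ht := eq_take_of_mem u v w hwu hwv h
    have hsub : D v ⊆ D u := by
      calc D v = D (v.take u.length ++ v.drop u.length) := by rw [List.take_append_drop]
        _ ⊆ D (v.take u.length) := D_append_subset _ _
        _ = D u := by rw [← ht]
    exact Set.inter_eq_right.mpr hsub
  rintro s ⟨u, rfl⟩ t ⟨v, rfl⟩ hne
  obtain ⟨w, hwu, hwv⟩ := hne
  rcases le_total u.length v.length with h | h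
  · rw [key u v w hwu hwv h]; exact ⟨v, rfl⟩
  · rw [Set.inter_comm, key v u w hwv hwu h]; exact ⟨u, rfl⟩

def E : List ℕ → List Bool
  | [] => []
  | n :: a => List.replicate n true ++ false :: E a

lemma shf_dec (w : ℕ → ℕ) : shf (dec w) = shf w := funext fun i => by simp [shf, dec]

lemma mem_D_rep (n : ℕ) (u : List Bool) : ∀ w, w ∈ D (List.replicate n true ++ false :: u) ↔
    w 0 = n ∧ shf w ∈ D u := by
  induction n with
  | zero => intro w; exact Iff.rfl
  | succ n ih =>
    intro w
    rw [List.replicate_succ, List.cons_append]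
    show w ∈ {w | w 0 ≠ 0} ∩ dec ⁻¹' D (List.replicate n true ++ false :: u) ↔ _
    simp only [Set.mem_inter_iff, Set.mem_setOf_eq, Set.mem_preimage]
    have hd : dec w 0 = w 0 - 1 := by simp [dec]
    constructor
    · rintro ⟨h1, h2⟩
      rw [ih (dec w), shf_dec, hd] at h2
      obtain ⟨h2a, h2b⟩ := h2
      exact ⟨by omega, h2b⟩
    · rintro ⟨h1, h2⟩
      refine ⟨by omega, ?_⟩
      rw [ih (dec w), shf_dec, hd]
      exact ⟨by omega, h2⟩

lemma mem_D_E : ∀ (a : List ℕ) (w : ℕ → ℕ), w ∈ D (E a) ↔ ∀ i < a.length, w i = a.getD i 0 := by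
  intro a
  induction a with
  | nil => intro w; simp [E, D]
  | cons n a ih =>
    intro w
    show w ∈ D (List.replicate n true ++ false :: E a) ↔ _
    rw [mem_D_rep, ih (shf w)]
    constructor
    · rintro ⟨h0, h⟩ i hi
      cases i with
      | zero => simpa using h0
      | succ j =>
        have := h j (by simpa using hi)
        simpa [shf] using this
    · intro h
      refine ⟨by simpa using h 0 (by simp), fun j hj => ?_⟩
      have := h (j + 1) (by simpa using hj)
      simpa [shf] using this

lemma gen_eq : (MeasurableSpace.pi : MeasurableSpace (ℕ → ℕ)) =
    MeasurableSpace.generateFrom cylSet := by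
  apply le_antisymm
  · refine iSup_le fun i => ?_
    intro s hs
    obtain ⟨t, -, rfl⟩ := hs
    have h1 : (fun w : ℕ → ℕ => w i) ⁻¹' t = ⋃ n ∈ t, {w : ℕ → ℕ | w i = n} := by
      ext w; simp [Set.mem_preimage, eq_comm]
    rw [h1]
    refine MeasurableSet.biUnion (Set.to_countable t) fun n _ => ?_
    have h2 : {w : ℕ → ℕ | w i = n} = ⋃ c : Fin i → ℕ, D (E (List.ofFn c ++ [n])) := by
      ext w
      simp only [Set.mem_setOf_eq, Set.mem_iUnion]
      constructor
      · intro h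
        refine ⟨fun j => w j, ?_⟩
        rw [mem_D_E]
        intro j hj
        simp only [List.length_append, List.length_ofFn, List.length_singleton] at hj
        rcases lt_or_ge j i with hji | hji
        · rw [List.getD_append _ _ _ _ (by simpa using hji)]
          rw [List.getD_eq_getElem _ _ (by simpa using hji)]
          simp
        · have hji' : j = i := by omega
          subst hji'
          rw [List.getD_append_right _ _ _ _ (by simp), h]
          simp
      · rintro ⟨c, hc⟩
        rw [mem_D_E] at hc
        have := hc i (by simp)
        rw [List.getD_append_right _ _ _ _ (by simp), List.length_ofFn] at this
        simpa using this
    rw [h2]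
    exact MeasurableSet.iUnion fun c =>
      MeasurableSpace.measurableSet_generateFrom ⟨_, rfl⟩
  · exact MeasurableSpace.generateFrom_le (by rintro s ⟨u, rfl⟩; exact measurableSet_D u)

lemma measure_eq_of_D (μ ν : Measure (ℕ → ℕ)) [IsProbabilityMeasure μ] [IsProbabilityMeasure ν]
    (h : ∀ u : List Bool, μ (D u) = ν (D u)) : μ = ν :=
  ext_of_generate_finite cylSet gen_eq isPiSystem_cylSet
    (by rintro s ⟨u, rfl⟩; exact h u) (by simp)

section Haar

abbrev G : Type := ℕ → ZMod 2

noncomputable def nu : Measure G := Measure.addHaarMeasure ⊤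

instance : IsProbabilityMeasure nu :=
  ⟨by
    have h : (Set.univ : Set G) = ↑(⊤ : TopologicalSpace.PositiveCompacts G) := by
      simp
    rw [h]
    exact Measure.addHaarMeasure_self⟩

def B (k : ℕ) (c : Fin k → ZMod 2) : Set G := {g | ∀ j : Fin k, g j = c j}

lemma measurableSet_B (k : ℕ) (c : Fin k → ZMod 2) : MeasurableSet (B k c) := by
  have h : B k c = ⋂ j : Fin k, (fun g : G => g j) ⁻¹' {c j} := by ext g; simp [B]
  rw [h]
  exact MeasurableSet.iInter fun j => (measurable_pi_apply _) (measurableSet_singleton _)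

lemma zmod2_arith : ∀ a b x : ZMod 2, b - a + x = b ↔ x = a := by decide

lemma B_translate (k : ℕ) (c d : Fin k → ZMod 2) :
    B k c = (fun g : G => (fun i => if h : i < k then d ⟨i, h⟩ - c ⟨i, h⟩ else 0) + g) ⁻¹'
      B k d := by
  ext g
  simp only [B, Set.mem_preimage, Set.mem_setOf_eq, Pi.add_apply]
  constructor
  · intro h j
    rw [dif_pos j.isLt, Fin.eta, h j, zmod2_arith]
  · intro h j
    have hj := h j
    rw [dif_pos j.isLt, Fin.eta] at hj
    exact (zmod2_arith (c j) (d j) (g j)).1 hj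

instance : nu.IsAddLeftInvariant := by unfold nu; infer_instance

lemma measure_B (k : ℕ) (c : Fin k → ZMod 2) : nu (B k c) = 2⁻¹ ^ k := by
  have heq : ∀ d : Fin k → ZMod 2, nu (B k d) = nu (B k c) := by
    intro d
    rw [B_translate k d c, measure_preimage_add]
  have hdis : Pairwise (Function.onFun Disjoint fun d : Fin k → ZMod 2 => B k d) := by
    intro c1 c2 hne
    rw [Function.onFun, Set.disjoint_left]
    intro g hg1 hg2
    exact hne (funext fun j => (hg1 j).symm.trans (hg2 j))
  have hcover : ⋃ d : Fin k → ZMod 2, B k d = Set.univ := by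
    ext g
    simp only [Set.mem_iUnion, Set.mem_univ, iff_true]
    exact ⟨fun j => g j, fun j => rfl⟩
  have h1 : (1 : ℝ≥0∞) = ∑' d : Fin k → ZMod 2, nu (B k d) := by
    rw [← measure_iUnion hdis (measurableSet_B k), hcover, measure_univ]
  rw [tsum_fintype] at h1
  have h2 : ∑ d : Fin k → ZMod 2, nu (B k d) = (2 ^ k : ℕ) * nu (B k c) := by
    rw [Finset.sum_congr rfl fun d _ => heq d, Finset.sum_const, Finset.card_univ,
      nsmul_eq_mul]
    congr 1
    norm_cast
    simp [Fintype.card_fun]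
  rw [h2] at h1
  have hne : ((2 ^ k : ℕ) : ℝ≥0∞) ≠ 0 := by positivity
  have hnt : ((2 ^ k : ℕ) : ℝ≥0∞) ≠ ⊤ := by
    simp
  calc nu (B k c) = ((2 ^ k : ℕ) : ℝ≥0∞)⁻¹ * (((2 ^ k : ℕ) : ℝ≥0∞) * nu (B k c)) := by
        rw [← mul_assoc, ENNReal.inv_mul_cancel hne hnt, one_mul]
    _ = ((2 ^ k : ℕ) : ℝ≥0∞)⁻¹ * 1 := by rw [← h1]
    _ = 2⁻¹ ^ k := by
        rw [mul_one]
        push_cast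
        rw [← ENNReal.inv_pow]

lemma zmod2_eq_one (a : ZMod 2) (h : a ≠ 0) : a = 1 := by revert a h; decide

lemma nu_singleton (g : G) : nu {g} = 0 := by
  by_contra h
  obtain ⟨k, hk⟩ := ENNReal.exists_inv_two_pow_lt h
  have hsub : {g} ⊆ B k fun j => g j := by
    rintro x hx j
    rw [Set.mem_singleton_iff] at hx
    subst hx
    rfl
  have hle : nu {g} ≤ 2⁻¹ ^ k := (measure_mono hsub).trans_eq (measure_B k _)
  exact absurd hle (not_le.mpr hk)

open Classical in
noncomputable def F (g : G) : ℕ := if h : ∃ j, g j = 0 then Nat.find h else 0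

noncomputable def psi : ℕ → G → ℕ
  | 0, g => F g
  | k + 1, g => psi k fun i => g (i + F g + 1)

def shg (g : G) : G := fun i => g (i + 1)

def CG : List Bool → Set G
  | [] => Set.univ
  | b :: u => {g | g 0 = (cond b 1 0 : ZMod 2)} ∩ shg ⁻¹' CG u

def IZ (g : G) : Prop := ∀ n, ∃ j, n ≤ j ∧ g j = 0

lemma IZ.ex {g : G} (h : IZ g) : ∃ j, g j = 0 := (h 0).imp fun _ hj => hj.2

lemma IZ.shg {g : G} (h : IZ g) : IZ (BOdo.shg g) := by
  intro n
  obtain ⟨j, hj, hz⟩ := h (n + 1)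
  refine ⟨j - 1, by omega, ?_⟩
  show g (j - 1 + 1) = 0
  rw [show j - 1 + 1 = j by omega]
  exact hz

lemma F_zero {g : G} (h : g 0 = 0) : F g = 0 := by
  rw [F, dif_pos ⟨0, h⟩]
  exact (Nat.find_eq_zero ⟨0, h⟩).mpr h

lemma F_eq_zero_iff {g : G} (h : IZ g) : F g = 0 ↔ g 0 = 0 := by
  constructor
  · intro hf
    rw [F, dif_pos h.ex] at hf
    have := Nat.find_spec h.ex
    rwa [hf] at this
  · exact F_zero

lemma F_shg {g : G} (h0 : g 0 ≠ 0) (hex : ∃ j, g j = 0) : F g = F (shg g) + 1 := by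
  have hex' : ∃ j, shg g j = 0 := by
    obtain ⟨j, hj⟩ := hex
    cases j with
    | zero => exact absurd hj h0
    | succ m => exact ⟨m, hj⟩
  rw [F, dif_pos hex, F, dif_pos hex', Nat.find_eq_iff]
  refine ⟨Nat.find_spec hex', fun n hn => ?_⟩
  cases n with
  | zero => exact h0
  | succ m => exact Nat.find_min hex' (by omega)

lemma psi_succ (k : ℕ) (g : G) : psi (k + 1) g = psi k fun i => g (i + F g + 1) := rfl

lemma dec_psi {g : G} (h0 : g 0 ≠ 0) (hex : ∃ j, g j = 0) :
    dec (fun k => psi k g) = fun k => psi k (shg g) := by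
  funext k
  cases k with
  | zero =>
    show (if (0 : ℕ) = 0 then psi 0 g - 1 else psi 0 g) = psi 0 (shg g)
    rw [if_pos rfl]
    show F g - 1 = F (shg g)
    rw [F_shg h0 hex]
    omega
  | succ m =>
    show (if m + 1 = 0 then psi 0 g - 1 else psi (m + 1) g) = psi (m + 1) (shg g)
    rw [if_neg (Nat.succ_ne_zero m), psi_succ, psi_succ]
    congr 1
    funext i
    show g (i + F g + 1) = shg g (i + F (shg g) + 1)
    show g (i + F g + 1) = g (i + F (shg g) + 1 + 1)
    congr 1
    rw [F_shg h0 hex]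
    omega

lemma shf_psi {g : G} (h0 : g 0 = 0) :
    shf (fun k => psi k g) = fun k => psi k (shg g) := by
  funext k
  show psi (k + 1) g = psi k (shg g)
  rw [psi_succ, F_zero h0]
  rfl

lemma zmod2_one_ne_zero : (1 : ZMod 2) ≠ 0 := by decide

lemma psi_mem_D : ∀ (u : List Bool) (g : G), IZ g →
    ((fun k => psi k g) ∈ D u ↔ g ∈ CG u) := by
  intro u
  induction u with
  | nil => intro g _; simp [D, CG]
  | cons b u ih =>
    intro g hg
    cases b
    · show _ ∈ {w : ℕ → ℕ | w 0 = 0} ∩ shf ⁻¹' D u ↔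
        _ ∈ {g : G | g 0 = (0 : ZMod 2)} ∩ shg ⁻¹' CG u
      simp only [Set.mem_inter_iff, Set.mem_setOf_eq, Set.mem_preimage]
      constructor
      · rintro ⟨h1, h2⟩
        have hg0 : g 0 = 0 := (F_eq_zero_iff hg).1 h1
        rw [shf_psi hg0] at h2
        exact ⟨hg0, (ih (shg g) hg.shg).1 h2⟩
      · rintro ⟨h1, h2⟩
        refine ⟨(F_eq_zero_iff hg).2 h1, ?_⟩
        rw [shf_psi h1]
        exact (ih (shg g) hg.shg).2 h2
    · show _ ∈ {w : ℕ → ℕ | w 0 ≠ 0} ∩ dec ⁻¹' D u ↔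
        _ ∈ {g : G | g 0 = (1 : ZMod 2)} ∩ shg ⁻¹' CG u
      simp only [Set.mem_inter_iff, Set.mem_setOf_eq, Set.mem_preimage]
      constructor
      · rintro ⟨h1, h2⟩
        have hg0 : g 0 ≠ 0 := fun hz => h1 ((F_eq_zero_iff hg).2 hz)
        rw [dec_psi hg0 hg.ex] at h2
        exact ⟨zmod2_eq_one _ hg0, (ih (shg g) hg.shg).1 h2⟩
      · rintro ⟨h1, h2⟩
        have hg0 : g 0 ≠ 0 := by rw [h1]; exact zmod2_one_ne_zero
        refine ⟨fun hz => hg0 ((F_eq_zero_iff hg).1 hz), ?_⟩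
        rw [dec_psi hg0 hg.ex]
        exact (ih (shg g) hg.shg).2 h2

lemma mem_CG : ∀ (u : List Bool) (g : G), g ∈ CG u ↔
    ∀ i < u.length, g i = (cond (u.getD i false) 1 0 : ZMod 2) := by
  intro u
  induction u with
  | nil => intro g; simp [CG]
  | cons b u ih =>
    intro g
    show g ∈ {g : G | g 0 = (cond b 1 0 : ZMod 2)} ∩ shg ⁻¹' CG u ↔ _
    simp only [Set.mem_inter_iff, Set.mem_setOf_eq, Set.mem_preimage]
    rw [ih (shg g)]
    constructor
    · rintro ⟨h0, h⟩ i hi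
      cases i with
      | zero => simpa using h0
      | succ j =>
        have := h j (by simpa using hi)
        simpa [shg] using this
    · intro h
      refine ⟨by simpa using h 0 (by simp), fun j hj => ?_⟩
      have := h (j + 1) (by simpa using hj)
      simpa [shg] using this

lemma nu_CG (u : List Bool) : nu (CG u) = 2⁻¹ ^ u.length := by
  have hB : CG u = B u.length fun j : Fin u.length =>
      (cond (u.getD j false) 1 0 : ZMod 2) := by
    ext g
    rw [mem_CG]
    constructor
    · intro h j
      exact h j j.isLt
    · intro h i hi
      exact h ⟨i, hi⟩
  rw [hB, measure_B]

instance : MeasureTheory.NullSingletonClass nu := ⟨nu_singleton⟩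

lemma IZ_ae : ∀ᵐ g ∂nu, IZ g := by
  have hnull : ∀ m : ℕ, nu {g : G | ∀ j, m ≤ j → g j ≠ 0} = 0 := by
    intro m
    have hc : Set.Countable {g : G | ∀ j, m ≤ j → g j ≠ 0} := by
      apply Set.Countable.mono ?_
        (Set.countable_range fun (c : Fin m → ZMod 2) (i : ℕ) =>
          if h : i < m then c ⟨i, h⟩ else 1)
      intro g hg
      refine ⟨fun j => g j, ?_⟩
      funext i
      by_cases h : i < m
      · simp [h]
      · simp only [dif_neg h]
        exact (zmod2_eq_one _ (hg i (by omega))).symm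
    exact hc.measure_zero nu
  rw [MeasureTheory.ae_iff]
  refine measure_mono_null ?_ (measure_iUnion_null hnull)
  intro g hg
  simp only [Set.mem_setOf_eq, IZ] at hg
  push_neg at hg
  obtain ⟨m, hm⟩ := hg
  exact Set.mem_iUnion.mpr ⟨m, hm⟩

lemma measurable_F : Measurable F := by
  apply measurable_to_countable'
  intro n
  by_cases hn : n = 0
  · subst hn
    have h : F ⁻¹' {0} = {g : G | g 0 = 0} ∪ ⋂ j, {g : G | g j ≠ 0} := by
      ext g
      simp only [Set.mem_preimage, Set.mem_singleton_iff, Set.mem_union, Set.mem_iInter,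
        Set.mem_setOf_eq]
      constructor
      · intro hf
        by_cases hex : ∃ j, g j = 0
        · rw [F, dif_pos hex] at hf
          left
          have := Nat.find_spec hex
          rwa [hf] at this
        · right
          push_neg at hex
          exact hex
      · intro hf
        rcases hf with hf | hf
        · exact F_zero hf
        · rw [F, dif_neg (by push_neg; exact hf)]
    rw [h]
    exact MeasurableSet.union
      ((measurable_pi_apply 0) (measurableSet_singleton 0))
      (MeasurableSet.iInter fun j =>
        ((measurable_pi_apply j) (measurableSet_singleton 0)).compl)
  · have h : F ⁻¹' {n} = {g : G | g n = 0} ∩ ⋂ i ∈ Set.Iio n, {g : G | g i ≠ 0} := by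
      ext g
      simp only [Set.mem_preimage, Set.mem_singleton_iff, Set.mem_inter_iff, Set.mem_iInter,
        Set.mem_setOf_eq, Set.mem_Iio]
      constructor
      · intro hf
        by_cases hex : ∃ j, g j = 0
        · rw [F, dif_pos hex] at hf
          exact ⟨by rw [← hf]; exact Nat.find_spec hex,
            fun i hi => Nat.find_min hex (by omega)⟩
        · rw [F, dif_neg hex] at hf
          exact absurd hf.symm hn
      · rintro ⟨h1, h2⟩
        rw [F, dif_pos ⟨n, h1⟩, Nat.find_eq_iff]
        exact ⟨h1, fun m hm => h2 m hm⟩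
    rw [h]
    exact MeasurableSet.inter
      ((measurable_pi_apply n) (measurableSet_singleton 0))
      (MeasurableSet.biInter (Set.to_countable _) fun i _ =>
        ((measurable_pi_apply i) (measurableSet_singleton 0)).compl)

lemma measurable_shift_F : Measurable fun g : G => (fun i => g (i + F g + 1) : G) := by
  apply measurable_pi_lambda
  intro i
  apply measurable_to_countable'
  intro x
  have h : (fun g : G => g (i + F g + 1)) ⁻¹' {x} =
      ⋃ m, F ⁻¹' {m} ∩ (fun g : G => g (i + m + 1)) ⁻¹' {x} := by
    ext g
    simp only [Set.mem_preimage, Set.mem_singleton_iff, Set.mem_iUnion, Set.mem_inter_iff]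
    constructor
    · intro hg
      exact ⟨F g, rfl, hg⟩
    · rintro ⟨m, rfl, hg⟩
      exact hg
  rw [h]
  exact MeasurableSet.iUnion fun m =>
    (measurable_F (measurableSet_singleton m)).inter
      ((measurable_pi_apply _) (measurableSet_singleton x))

lemma measurable_psi (k : ℕ) : Measurable (psi k) := by
  induction k with
  | zero => exact measurable_F
  | succ k ih => exact ih.comp measurable_shift_F

lemma measurable_psifun : Measurable fun g : G => (fun k => psi k g) :=
  measurable_pi_lambda _ measurable_psi

noncomputable def muStar : Measure (ℕ → ℕ) := nu.map fun g k => psi k g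

instance : IsProbabilityMeasure muStar :=
  Measure.isProbabilityMeasure_map measurable_psifun.aemeasurable

lemma muStar_D (u : List Bool) : muStar (D u) = 2⁻¹ ^ u.length := by
  rw [muStar, Measure.map_apply measurable_psifun (measurableSet_D u)]
  have hae : ((fun g : G => fun k => psi k g) ⁻¹' D u : Set G) =ᵐ[nu] CG u := by
    rw [Filter.eventuallyEq_set]
    filter_upwards [IZ_ae] with g hg
    exact psi_mem_D u g hg
  rw [measure_congr hae, nu_CG]

end Haar

lemma measurable_odo : Measurable baireOdometer := by
  apply measurable_pi_lambda
  intro i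
  apply measurable_to_countable'
  intro n
  have h : (fun w : ℕ → ℕ => baireOdometer w i) ⁻¹' {n} =
      ⋃ k, (fun w : ℕ → ℕ => w 0) ⁻¹' {k} ∩
        (fun w : ℕ → ℕ => if i < k then 0 else if i = k then w 1 + 1 else w (i - k + 1)) ⁻¹'
          {n} := by
    ext w
    simp only [Set.mem_preimage, Set.mem_singleton_iff, Set.mem_iUnion, Set.mem_inter_iff]
    constructor
    · intro hw
      exact ⟨w 0, rfl, hw⟩
    · rintro ⟨k, rfl, hw⟩
      exact hw
  rw [h]
  refine MeasurableSet.iUnion fun k => ((measurable_pi_apply 0) (measurableSet_singleton k)).inter ?_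
  by_cases h1 : i < k
  · simp only [if_pos h1]
    exact measurable_const (measurableSet_singleton n)
  · by_cases h2 : i = k
    · simp only [if_neg h1, if_pos h2]
      exact (Measurable.comp (g := fun m : ℕ => m + 1) (fun _ _ => trivial)
        (measurable_pi_apply 1)) (measurableSet_singleton n)
    · simp only [if_neg h1, if_neg h2]
      exact (measurable_pi_apply (i - k + 1)) (measurableSet_singleton n)

lemma muStar_inv : Measure.map baireOdometer muStar = muStar := by
  haveI : IsProbabilityMeasure (Measure.map baireOdometer muStar) :=
    Measure.isProbabilityMeasure_map measurable_odo.aemeasurable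
  apply measure_eq_of_D
  intro u
  rw [Measure.map_apply measurable_odo (measurableSet_D u), preimage_D, muStar_D, muStar_D,
    length_bpred]

end BOdo


/-- The `0`-odometer is uniquely ergodic: there is exactly one invariant Borel
probability measure on `ℕ₀^ℕ`. -/
theorem baireOdometer_uniquelyErgodic :
    ∃! μ : Measure (ℕ → ℕ),
      IsProbabilityMeasure μ ∧ MeasurePreserving baireOdometer μ μ := by
  refine ⟨BOdo.muStar, ⟨inferInstance, BOdo.measurable_odo, BOdo.muStar_inv⟩, ?_⟩
  rintro μ ⟨hp, hmp⟩
  haveI := hp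
  apply BOdo.measure_eq_of_D
  intro u
  rw [BOdo.forced μ (fun s hs => hmp.measure_preimage hs.nullMeasurableSet) u, BOdo.muStar_D]

end BOdoAux
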